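/- Let W, W' ∈ ℝ^{m×n} be two matrices. Define U_W = {(s, V) ∈ ℝ^m × ℝ^{m×n} : diag(s)·V = W} and U_{W'} similarly. Then the distance between the sets U_W and U_{W'} (with respect to any product norm, e.g. dist(U_W, U_{W'}) = inf_{x ∈ U_W, y ∈ U_{W'}} ‖x − y‖) equals 0. -/
import Mathlib


/-- The set of weight factorizations `(s, V)` of a matrix `W`, where `V` is represented
as a function `Fin m → Fin n → ℝ` and `diag(s) · V = W` means `s k * V k j = W k j`. -/
def factorizations (m n : ℕ) (W : Fin m → Fin n → ℝ) :
    Set ((Fin m → ℝ) × (Fin m → Fin n → ℝ)) :=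
  {p | ∀ k j, p.1 k * p.2 k j = W k j}

theorem dist_factorization_sets_eq_zero (m n : ℕ) (W W' : Fin m → Fin n → ℝ) :
    sInf {d : ℝ | ∃ x ∈ factorizations m n W, ∃ y ∈ factorizations m n W', d = dist x y}
      = 0 := by
  set S := {d : ℝ | ∃ x ∈ factorizations m n W, ∃ y ∈ factorizations m n W', d = dist x y}
  have hbdd : BddBelow S := by
    refine ⟨0, fun d hd => ?_⟩
    obtain ⟨x, _, y, _, rfl⟩ := hd
    exact dist_nonneg
  have hub : ∀ ε > (0:ℝ), ∃ d ∈ S, d ≤ ε := by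
    intro ε hε
    set δ : ℝ := ∑ k : Fin m, ∑ j : Fin n, |W k j - W' k j| with hδ
    have hδ0 : 0 ≤ δ := Finset.sum_nonneg fun k _ =>
      Finset.sum_nonneg fun j _ => abs_nonneg _
    set t : ℝ := (1 + δ) / ε with ht
    have ht0 : 0 < t := div_pos (by linarith) hε
    have htne : t ≠ 0 := ne_of_gt ht0
    refine ⟨dist ((fun _ => t, fun k j => W k j / t) :
        (Fin m → ℝ) × (Fin m → Fin n → ℝ)) (fun _ => t, fun k j => W' k j / t),
      ⟨_, fun k j => mul_div_cancel₀ _ htne, _, fun k j => mul_div_cancel₀ _ htne, rfl⟩, ?_⟩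
    rw [Prod.dist_eq]
    apply max_le
    · simp [dist_self]
      linarith
    · rw [dist_pi_le_iff (le_of_lt hε)]
      intro k
      rw [dist_pi_le_iff (le_of_lt hε)]
      intro j
      have hle : |W k j - W' k j| ≤ δ := by
        calc |W k j - W' k j| ≤ ∑ j : Fin n, |W k j - W' k j| :=
              Finset.single_le_sum (f := fun j => |W k j - W' k j|) (fun j _ => abs_nonneg _) (Finset.mem_univ j)
          _ ≤ δ := by
              rw [hδ]
              exact Finset.single_le_sum (f := fun k => ∑ j : Fin n, |W k j - W' k j|)
                (fun k _ => Finset.sum_nonneg fun j _ => abs_nonneg _) (Finset.mem_univ k)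
      rw [Real.dist_eq, div_sub_div_same, abs_div, abs_of_pos ht0, div_le_iff₀ ht0]
      calc |W k j - W' k j| ≤ δ := hle
        _ ≤ ε * t := by rw [ht, mul_div_cancel₀ _ (ne_of_gt hε)]; linarith
  have hne : S.Nonempty := by
    obtain ⟨d, hd, _⟩ := hub 1 one_pos
    exact ⟨d, hd⟩
  apply le_antisymm
  · refine le_of_forall_pos_le_add fun ε hε => ?_
    obtain ⟨d, hd, hdε⟩ := hub ε hε
    calc sInf S ≤ d := csInf_le hbdd hd
      _ ≤ 0 + ε := by linarith
  · refine le_csInf hne fun d hd => ?_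
    obtain ⟨x, _, y, _, rfl⟩ := hd
    exact dist_nonneg
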